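/- arXiv:2601.15398 — 8 statements merged into one kernel-verified Lean document; each statement's English description precedes it below -/
import Mathlib

section
/- If (t_k) is the FISTA parameter sequence (satisfying t_0 = 1, t_k ≥ (k+2)/2, t_k² ≥ t_{k+1}² − t_{k+1}), then the series ∑_{k≥2} 1/(t_k − 1) diverges to +∞. -/
/-! The recursion forces `t (k + 1) ≤ t k + 1`, hence `t k - 1 ≤ k`, so from `k = 2` on the series
dominates the harmonic series; `t k ≥ 2` there keeps every term positive. -/

open Filter Finset

theorem le_add_one_of_sq_sub_self_le_sq {a b : ℝ} (ha : 0 ≤ a) (h : b ^ 2 - b ≤ a ^ 2) :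
    b ≤ a + 1 := by
  nlinarith

theorem le_add_natCast_of_succ_le_add_one {u : ℕ → ℝ} (h : ∀ k, u (k + 1) ≤ u k + 1) (n : ℕ) :
    u n ≤ u 0 + n := by
  induction n with
  | zero => simp
  | succ n ih => push_cast; linarith [h n]

theorem tendsto_sum_Icc_one_div_atTop {f : ℕ → ℝ} {m : ℕ} (hpos : ∀ k, m ≤ k → 0 < f k)
    (hle : ∀ k, m ≤ k → f k ≤ k) :
    Tendsto (fun n => ∑ k ∈ Icc m n, 1 / f k) atTop atTop := by
  set g : ℕ → ℝ := fun i => 1 / f (m + i)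
  have hg_nonneg : ∀ i, 0 ≤ g i := fun i => (one_div_pos.mpr (hpos _ (by omega))).le
  have hg : ¬Summable g := fun hs => Real.not_summable_one_div_natCast <|
    (summable_nat_add_iff m).mp <| hs.of_nonneg_of_le (fun _ => by positivity) fun i => by
      rw [add_comm i m]
      exact one_div_le_one_div_of_le (hpos _ (by omega)) (hle _ (by omega))
  have hsum : ∀ n, ∑ k ∈ Icc m n, 1 / f k = ∑ i ∈ range (n + 1 - m), g i := fun n => by
    rw [← Ico_add_one_right_eq_Icc, sum_Ico_eq_sum_range]
  simp only [hsum]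
  exact ((not_summable_iff_tendsto_nat_atTop_of_nonneg hg_nonneg).mp hg).comp
    ((tendsto_sub_atTop_nat m).comp (tendsto_add_atTop_nat 1))

theorem fista_param_series_diverges_general (t : ℕ → ℝ)
    (ht0 : t 0 = 1)
    (hlow : ∀ k : ℕ, ((k : ℝ) + 2) / 2 ≤ t k)
    (hrec : ∀ k : ℕ, (t (k + 1)) ^ 2 - t (k + 1) ≤ (t k) ^ 2) :
    Tendsto (fun n : ℕ => ∑ k ∈ Finset.Icc 2 n, 1 / (t k - 1)) atTop atTop := by
  have hnonneg : ∀ k, 0 ≤ t k := fun k => le_trans (by positivity) (hlow k)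
  have hle : ∀ k, t k ≤ 1 + k := fun k => ht0 ▸ le_add_natCast_of_succ_le_add_one
    (fun k => le_add_one_of_sq_sub_self_le_sq (hnonneg k) (hrec k)) k
  refine tendsto_sum_Icc_one_div_atTop (fun k hk => ?_) (fun k _ => by linarith [hle k])
  have hk2 : (2 : ℝ) ≤ k := by exact_mod_cast hk
  linarith [hlow k]

theorem fista_param_series_diverges (t : ℕ → ℝ)
    (hpos : ∀ k, 0 < t k) (ht0 : t 0 = 1)
    (hlow : ∀ k : ℕ, ((k : ℝ) + 2) / 2 ≤ t k)
    (hrec : ∀ k : ℕ, (t (k + 1)) ^ 2 - t (k + 1) ≤ (t k) ^ 2) :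
    Tendsto (fun n : ℕ => ∑ k ∈ Finset.Icc 2 n, 1 / (t k - 1)) atTop atTop :=
  fista_param_series_diverges_general t ht0 hlow hrec
end

section
/- Let (φ_k) be a sequence of positive reals with ∑_k 1/φ_k = +∞, and let (h_k) be a sequence of reals such that g_k := h_{k+1} + φ_k(h_{k+1} − h_k) converges to a real number ℓ. Then h_k → ℓ. -/
/-!
Solving for `h (k + 1)` exhibits it as the convex combination `a k * h k + (1 - a k) * g k`
with `a k = (1 + 1 / φ k)⁻¹`. Iterating from `N` gives
`|h k - ℓ| ≤ (∏ j ∈ Ico N k, a j) * |h N - ℓ| + sup_{j ≥ N} |g j - ℓ|`, and the product tends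
to `0` because `∏ (1 + 1 / φ j) ≥ 1 + ∑ 1 / φ j` diverges.
-/

open Filter Finset Topology

theorem Finset.one_add_sum_le_prod_one_add {ι R : Type*} [CommSemiring R] [PartialOrder R]
    [IsOrderedRing R] (s : Finset ι) {f : ι → R} (hf : ∀ i ∈ s, 0 ≤ f i) :
    1 + ∑ i ∈ s, f i ≤ ∏ i ∈ s, (1 + f i) := by
  induction s using Finset.cons_induction with
  | empty => simp
  | cons a s _ ih =>
    have hfa : 0 ≤ f a := hf a (mem_cons_self a s)
    have hs : 0 ≤ ∑ i ∈ s, f i := sum_nonneg fun i hi => hf i (mem_cons_of_mem hi)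
    rw [sum_cons, prod_cons]
    calc 1 + (f a + ∑ i ∈ s, f i) ≤ 1 + (f a + ∑ i ∈ s, f i) + f a * ∑ i ∈ s, f i :=
          le_add_of_nonneg_right (mul_nonneg hfa hs)
      _ = (1 + f a) * (1 + ∑ i ∈ s, f i) := by ring
      _ ≤ (1 + f a) * ∏ i ∈ s, (1 + f i) :=
          mul_le_mul_of_nonneg_left (ih fun i hi => hf i (mem_cons_of_mem hi))
            (add_nonneg zero_le_one hfa)

theorem tendsto_prod_Ico_inv_one_add_zero {u : ℕ → ℝ} (hu : ∀ k, 0 ≤ u k)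
    (hdiv : Tendsto (fun n => ∑ k ∈ range n, u k) atTop atTop) (N : ℕ) :
    Tendsto (fun n => ∏ j ∈ Ico N n, (1 + u j)⁻¹) atTop (𝓝 0) := by
  have htail : Tendsto (fun n => 1 + ∑ j ∈ Ico N n, u j) atTop atTop := by
    refine tendsto_atTop_add_const_left _ 1 ?_
    refine (tendsto_atTop_add_const_right _ (-∑ k ∈ range N, u k) hdiv).congr' ?_
    filter_upwards [eventually_ge_atTop N] with n hn
    rw [sum_Ico_eq_sub _ hn, sub_eq_add_neg]
  have hprod : Tendsto (fun n => ∏ j ∈ Ico N n, (1 + u j)) atTop atTop :=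
    tendsto_atTop_mono (fun n => (Ico N n).one_add_sum_le_prod_one_add fun j _ => hu j) htail
  simp_rw [prod_inv_distrib]
  exact hprod.inv_tendsto_atTop

section ConvexRecursion

variable {E : Type*} [NormedAddCommGroup E] [NormedSpace ℝ E] {a : ℕ → ℝ} {x y : ℕ → E} {ℓ : E}

theorem norm_sub_le_prod_Ico_mul_add_of_convex_recursion (ha₀ : ∀ k, 0 ≤ a k)
    (ha₁ : ∀ k, a k ≤ 1) (hrec : ∀ k, x (k + 1) = a k • x k + (1 - a k) • y k)
    {N : ℕ} {ε : ℝ} (hy : ∀ k, N ≤ k → ‖y k - ℓ‖ ≤ ε) :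
    ∀ k, N ≤ k → ‖x k - ℓ‖ ≤ (∏ j ∈ Ico N k, a j) * ‖x N - ℓ‖ + ε := by
  intro k hk
  induction k, hk using Nat.le_induction with
  | base => simpa using (norm_nonneg _).trans (hy N le_rfl)
  | succ k hk ih =>
    have hak : 0 ≤ a k := ha₀ k
    have hak' : 0 ≤ 1 - a k := sub_nonneg.2 (ha₁ k)
    have hsplit : x (k + 1) - ℓ = a k • (x k - ℓ) + (1 - a k) • (y k - ℓ) := by
      rw [hrec]; module
    calc ‖x (k + 1) - ℓ‖ ≤ a k * ‖x k - ℓ‖ + (1 - a k) * ‖y k - ℓ‖ := by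
          rw [hsplit]
          refine (norm_add_le _ _).trans_eq ?_
          rw [norm_smul, norm_smul, Real.norm_of_nonneg hak, Real.norm_of_nonneg hak']
      _ ≤ a k * ((∏ j ∈ Ico N k, a j) * ‖x N - ℓ‖ + ε) + (1 - a k) * ε := by
          gcongr
          exact hy k hk
      _ = (∏ j ∈ Ico N (k + 1), a j) * ‖x N - ℓ‖ + ε := by
          rw [prod_Ico_succ_top hk]; ring

theorem tendsto_of_convex_recursion (ha₀ : ∀ k, 0 ≤ a k) (ha₁ : ∀ k, a k ≤ 1)
    (hprod : ∀ N, Tendsto (fun n => ∏ j ∈ Ico N n, a j) atTop (𝓝 0))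
    (hrec : ∀ k, x (k + 1) = a k • x k + (1 - a k) • y k) (hy : Tendsto y atTop (𝓝 ℓ)) :
    Tendsto x atTop (𝓝 ℓ) := by
  rw [Metric.tendsto_nhds]
  intro ε hε
  obtain ⟨N, hN⟩ := eventually_atTop.1 (hy.eventually (Metric.closedBall_mem_nhds ℓ (half_pos hε)))
  have hbound := norm_sub_le_prod_Ico_mul_add_of_convex_recursion ha₀ ha₁ hrec (ℓ := ℓ)
    fun k hk => (dist_eq_norm _ _).symm.trans_le (hN k hk)
  have hlim : Tendsto (fun k => (∏ j ∈ Ico N k, a j) * ‖x N - ℓ‖ + ε / 2) atTop (𝓝 (ε / 2)) := by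
    simpa using ((hprod N).mul_const ‖x N - ℓ‖).add_const (ε / 2)
  filter_upwards [hlim.eventually (gt_mem_nhds (half_lt_self hε)), eventually_ge_atTop N]
    with k hk hkN
  rw [dist_eq_norm]
  exact (hbound k hkN).trans_lt hk

end ConvexRecursion

theorem bcch_lemma_finite (φ h : ℕ → ℝ) (ℓ : ℝ)
    (hφ : ∀ k, 0 < φ k)
    (hdiv : Tendsto (fun n : ℕ => ∑ k ∈ Finset.range n, 1 / φ k) atTop atTop)
    (hg : Tendsto (fun k => h (k + 1) + φ k * (h (k + 1) - h k)) atTop (nhds ℓ)) :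
    Tendsto h atTop (nhds ℓ) := by
  have hinv : ∀ k, 0 ≤ 1 / φ k := fun k => (one_div_pos.2 (hφ k)).le
  refine tendsto_of_convex_recursion (a := fun k => (1 + 1 / φ k)⁻¹)
    (fun k => inv_nonneg.2 (by linarith [hinv k]))
    (fun k => inv_le_one_of_one_le₀ (by linarith [hinv k]))
    (tendsto_prod_Ico_inv_one_add_zero hinv hdiv) (fun k => ?_) hg
  have hφk : φ k ≠ 0 := (hφ k).ne'
  have hφk' : φ k + 1 ≠ 0 := by linarith [hφ k]
  simp only [smul_eq_mul]
  field_simp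
  ring
end

section
/- Let (φ_k) be a sequence of positive reals with ∑_k 1/φ_k = +∞, and let (h_k) be a sequence of reals such that g_k := h_{k+1} + φ_k(h_{k+1} − h_k) tends to +∞. Then h_k → +∞. -/
/-!
Solving the defining relation for `h (k + 1)` exhibits it as the convex combination
`a k * g k + (1 - a k) * h k` with weight `a k = 1 / (1 + φ k)`. Once `g k ≥ c`, the deficit
`max (c - h k) 0` is therefore multiplied by at most `1 - a k ≤ exp (-a k)` at each step, and it
tends to `0` because `∑ a k` diverges together with `∑ 1 / φ k`.
-/

open Filter Topology Finset

theorem summable_one_div_of_summable_one_div_one_add {φ : ℕ → ℝ} (hφ : ∀ k, 0 < φ k)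
    (h : Summable fun k => 1 / (1 + φ k)) : Summable fun k => 1 / φ k := by
  refine (h.mul_left 2).of_norm_bounded_eventually_nat ?_
  filter_upwards [h.tendsto_atTop_zero.eventually_le_const (by norm_num : (0 : ℝ) < 1 / 2)]
    with k hk
  have hφk := hφ k
  have hone : 1 ≤ φ k := by
    rw [div_le_div_iff₀ (by linarith) two_pos] at hk
    linarith
  rw [Real.norm_of_nonneg (by positivity), mul_one_div, div_le_div_iff₀ hφk (by linarith)]
  linarith

theorem tendsto_zero_of_le_one_sub_mul {e a : ℕ → ℝ} (ha : ∀ k, 0 ≤ a k) (hsum : ¬ Summable a)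
    (he : ∀ k, 0 ≤ e k) (hstep : ∀ k, e (k + 1) ≤ (1 - a k) * e k) :
    Tendsto e atTop (𝓝 0) := by
  have hbound : ∀ n, e n ≤ e 0 * Real.exp (-∑ k ∈ range n, a k) := by
    intro n
    induction n with
    | zero => simp
    | succ n ih =>
      rw [sum_range_succ, neg_add, Real.exp_add, ← mul_assoc]
      calc e (n + 1) ≤ (1 - a n) * e n := hstep n
        _ ≤ Real.exp (-a n) * e n := by
          gcongr
          · exact he n
          · linarith [Real.add_one_le_exp (-a n)]
        _ ≤ Real.exp (-a n) * (e 0 * Real.exp (-∑ k ∈ range n, a k)) := by gcongr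
        _ = _ := by ring
  have hpartial := (not_summable_iff_tendsto_nat_atTop_of_nonneg ha).mp hsum
  have hlim : Tendsto (fun n => e 0 * Real.exp (-∑ k ∈ range n, a k)) atTop (𝓝 0) := by
    simpa using (Real.tendsto_exp_atBot.comp (tendsto_neg_atTop_atBot.comp hpartial)).const_mul
      (e 0)
  exact tendsto_of_tendsto_of_tendsto_of_le_of_le tendsto_const_nhds hlim he hbound

theorem tendsto_zero_of_eventually_le_one_sub_mul {e a : ℕ → ℝ} (ha : ∀ k, 0 ≤ a k)
    (hsum : ¬ Summable a) (he : ∀ k, 0 ≤ e k)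
    (hstep : ∀ᶠ k in atTop, e (k + 1) ≤ (1 - a k) * e k) :
    Tendsto e atTop (𝓝 0) := by
  obtain ⟨N, hN⟩ := eventually_atTop.mp hstep
  rw [← tendsto_add_atTop_iff_nat N]
  refine tendsto_zero_of_le_one_sub_mul (a := fun k => a (k + N)) (fun k => ha _)
    (by rwa [summable_nat_add_iff]) (fun k => he _) fun k => ?_
  simpa [add_right_comm] using hN (k + N) (Nat.le_add_left N k)

theorem max_sub_le_of_le_add_mul_sub {φ c x y : ℝ} (hφ : 0 < φ) (hc : c ≤ y + φ * (y - x)) :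
    max (c - y) 0 ≤ (1 - 1 / (1 + φ)) * max (c - x) 0 := by
  have hweight : 1 - 1 / (1 + φ) = φ / (1 + φ) := by field_simp; ring
  rw [hweight]
  refine max_le ?_ (by positivity)
  rw [div_mul_eq_mul_div, le_div_iff₀ (by linarith)]
  nlinarith [le_max_left (c - x) 0]

theorem bcch_lemma_top (φ h : ℕ → ℝ)
    (hφ : ∀ k, 0 < φ k)
    (hdiv : Tendsto (fun n : ℕ => ∑ k ∈ Finset.range n, 1 / φ k) atTop atTop)
    (hg : Tendsto (fun k => h (k + 1) + φ k * (h (k + 1) - h k)) atTop atTop) :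
    Tendsto h atTop atTop := by
  have hweights : ¬ Summable fun k => 1 / (1 + φ k) := fun hs =>
    (not_summable_iff_tendsto_nat_atTop_of_nonneg fun k => (one_div_pos.mpr (hφ k)).le).mpr hdiv
      (summable_one_div_of_summable_one_div_one_add hφ hs)
  rw [tendsto_atTop]
  intro M
  have hdeficit : Tendsto (fun k => max (M + 1 - h k) 0) atTop (𝓝 0) :=
    tendsto_zero_of_eventually_le_one_sub_mul (fun k => by have := hφ k; positivity) hweights
      (fun k => le_max_right _ _)
      (by filter_upwards [hg.eventually_ge_atTop (M + 1)] with k hk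
          using max_sub_le_of_le_add_mul_sub (hφ k) hk)
  filter_upwards [hdeficit.eventually_lt_const one_pos] with k hk
  linarith [le_max_left (M + 1 - h k) 0]
end

section
/- Define φ_k := k for k ≥ 1, ℓ ∈ ℝ, h_k := ℓ + (−1)^k/k, and g_k := h_{k+1} + φ_k(h_{k+1} − h_k). Then h_k → ℓ but g_k = ℓ + 2·(−1)^{k+1}, so (g_k) does not converge to ℓ. -/
/-!
Since `k · ((-1)^k / k) = (-1)^k` for `k ≥ 1`, the correction term telescopes:
`g k = ℓ + (k + 1) (h (k + 1) - ℓ) - k (h k - ℓ) = ℓ + (-1)^(k+1) - (-1)^k`.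
So `g` keeps oscillating between `ℓ ± 2`, although `h k - ℓ = O(1/k)`.
-/

open Filter Topology

lemma tendsto_neg_one_pow_div_natCast_atTop_nhds_zero :
    Tendsto (fun k : ℕ => (-1 : ℝ) ^ k / k) atTop (𝓝 0) := by
  refine squeeze_zero_norm (fun k => ?_) tendsto_one_div_atTop_nhds_zero_nat
  simp

lemma not_tendsto_add_mul_neg_one_pow {u : ℕ → ℝ} {ℓ c : ℝ} (hc : c ≠ 0)
    (hu : ∀ᶠ k in atTop, u k = ℓ + c * (-1 : ℝ) ^ k) : ¬ Tendsto u atTop (𝓝 ℓ) := by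
  intro hlim
  have hpow : Tendsto (fun k : ℕ => (-1 : ℝ) ^ k) atTop (𝓝 0) := by
    have hdiff := (hlim.sub_const ℓ).div_const c
    rw [sub_self, zero_div] at hdiff
    refine hdiff.congr' (hu.mono fun k hk => ?_)
    rw [hk, add_sub_cancel_left, mul_div_cancel_left₀ _ hc]
  simp at hpow

theorem bcch_converse_fails_bounded (ℓ : ℝ) (h g : ℕ → ℝ)
    (hh : ∀ k : ℕ, h k = ℓ + (-1 : ℝ) ^ k / (k : ℝ))
    (hg : ∀ k : ℕ, g k = h (k + 1) + (k : ℝ) * (h (k + 1) - h k)) :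
    Tendsto h atTop (nhds ℓ) ∧
    (∀ k : ℕ, 1 ≤ k → g k = ℓ + 2 * (-1 : ℝ) ^ (k + 1)) ∧
    ¬ Tendsto g atTop (nhds ℓ) := by
  have hg_eq : ∀ k : ℕ, 1 ≤ k → g k = ℓ + 2 * (-1 : ℝ) ^ (k + 1) := by
    intro k hk
    have hk0 : (k : ℝ) ≠ 0 := by positivity
    rw [hg, hh, hh]
    push_cast
    field_simp
    ring
  refine ⟨?_, hg_eq, ?_⟩
  · simpa only [← funext hh, add_zero] using
      tendsto_neg_one_pow_div_natCast_atTop_nhds_zero.const_add ℓ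
  · refine not_tendsto_add_mul_neg_one_pow (c := -2) (by norm_num) ?_
    filter_upwards [eventually_ge_atTop 1] with k hk
    rw [hg_eq k hk, pow_succ]
    ring
end

section
/- Define φ_k := k for k ≥ 1, ℓ ∈ ℝ, h_k := ℓ + (−1)^k/√k, and g_k := h_{k+1} + φ_k(h_{k+1} − h_k). Then h_k → ℓ but g_k = ℓ + (−1)^{k+1}(√(k+1) + √k), so (g_k) is unbounded and does not converge to ℓ. -/
/-! Since `k / √k = √k`, one gets `g k - ℓ = (-1) ^ (k + 1) * ((k + 1) / √(k + 1) + k / √k)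
= (-1) ^ (k + 1) * (√(k + 1) + √k)`, whose absolute value tends to infinity. So `g` leaves every
bounded set, which rules out both boundedness and convergence, while `h k - ℓ = ±1 / √k → 0`. -/

open Filter Topology Real

theorem tendsto_sqrt_natCast_atTop : Tendsto (fun k : ℕ => √(k : ℝ)) atTop atTop :=
  tendsto_sqrt_atTop.comp tendsto_natCast_atTop_atTop

theorem tendsto_neg_one_pow_div_sqrt_natCast_zero :
    Tendsto (fun k : ℕ => (-1 : ℝ) ^ k / √k) atTop (𝓝 0) :=
  squeeze_zero_norm (fun k => by simp [abs_of_nonneg]) tendsto_sqrt_natCast_atTop.inv_tendsto_atTop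

/-- This also holds at `k = 0`, where `1 / √0 = 0`. -/
theorem neg_one_pow_div_sqrt_succ_add_mul_sub (k : ℕ) :
    (-1 : ℝ) ^ (k + 1) / √(k + 1) + k * ((-1) ^ (k + 1) / √(k + 1) - (-1) ^ k / √k) =
      (-1) ^ (k + 1) * (√(k + 1) + √k) := by
  calc _ = (-1 : ℝ) ^ (k + 1) * ((k + 1) / √(k + 1) + k / √k) := by ring
    _ = _ := by rw [div_sqrt, div_sqrt]

theorem not_exists_forall_abs_le_of_tendsto_abs_atTop {ι : Type*} {l : Filter ι} [l.NeBot]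
    {u : ι → ℝ} (hu : Tendsto (fun i => |u i|) l atTop) : ¬ ∃ M : ℝ, ∀ i, |u i| ≤ M := by
  rintro ⟨M, hM⟩
  obtain ⟨i, hi⟩ := (hu.eventually_gt_atTop M).exists
  exact (hM i).not_gt hi

theorem bcch_converse_fails_unbounded (ℓ : ℝ) (h g : ℕ → ℝ)
    (hh : ∀ k : ℕ, h k = ℓ + (-1 : ℝ) ^ k / Real.sqrt k)
    (hg : ∀ k : ℕ, g k = h (k + 1) + (k : ℝ) * (h (k + 1) - h k)) :
    Tendsto h atTop (nhds ℓ) ∧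
    (∀ k : ℕ, 1 ≤ k →
      g k = ℓ + (-1 : ℝ) ^ (k + 1) * (Real.sqrt (k + 1) + Real.sqrt k)) ∧
    (¬ ∃ M : ℝ, ∀ k : ℕ, |g k| ≤ M) ∧
    ¬ Tendsto g atTop (nhds ℓ) := by
  have hgk (k : ℕ) : g k = ℓ + (-1 : ℝ) ^ (k + 1) * (√(k + 1) + √k) := by
    rw [hg, hh, hh, ← neg_one_pow_div_sqrt_succ_add_mul_sub]
    push_cast
    ring
  have hg_dist : Tendsto (fun k => dist (g k) ℓ) atTop atTop := by
    refine tendsto_atTop_mono (fun k => ?_) tendsto_sqrt_natCast_atTop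
    rw [hgk, dist_eq, add_sub_cancel_left, abs_mul, abs_neg_one_pow, one_mul,
      abs_of_nonneg (by positivity)]
    exact le_add_of_nonneg_left (sqrt_nonneg _)
  have hg_abs : Tendsto (fun k => |g k|) atTop atTop :=
    tendsto_norm_cobounded_atTop.comp ((Metric.tendsto_dist_right_atTop_iff ℓ).1 hg_dist)
  refine ⟨?_, fun k _ => hgk k, not_exists_forall_abs_le_of_tendsto_abs_atTop hg_abs,
    fun hlim => not_tendsto_nhds_of_tendsto_atTop hg_abs _ hlim.abs⟩
  simpa only [funext hh, add_zero] using tendsto_neg_one_pow_div_sqrt_natCast_zero.const_add ℓ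
end

section
/- Define φ_k := k² for k ≥ 1, h_1 := 1, h_{k+1} := (φ_k/(1+φ_k)) h_k, and g_k := h_{k+1} + φ_k(h_{k+1} − h_k). Then g_k = 0 for all k ≥ 1, yet h_k → π/sinh(π) > 0. In particular, the divergence condition ∑ 1/φ_k = +∞ cannot be dropped from the BCCH Lemma. -/
/-!
Unrolling the recursion gives `h (n + 1) = ∏_{k ≤ n} k² / (1 + k²) = (∏_{k ≤ n} (1 + 1/k²))⁻¹`,
and Euler's product `sinh (π x) = π x ∏_{k ≥ 1} (1 + x²/k²)` (the sine product at `i x`), taken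
at `x = 1`, shows that this converges to `π / sinh π > 0`.
-/

open Filter Finset Topology Real

theorem Real.tendsto_euler_sinh_prod (x : ℝ) :
    Tendsto (fun n : ℕ => π * x * ∏ j ∈ range n, ((1 : ℝ) + x ^ 2 / ((j : ℝ) + 1) ^ 2))
      atTop (𝓝 (sinh (π * x))) := by
  have hsin := (Complex.continuous_im.tendsto _).comp
    (Complex.tendsto_euler_sin_prod (x * Complex.I))
  rw [← mul_assoc, ← Complex.ofReal_mul, Complex.sin_mul_I, Complex.mul_I_im,
    ← Complex.ofReal_sinh, Complex.ofReal_re] at hsin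
  refine hsin.congr fun n => ?_
  have hterm : ((π * x : ℝ) : ℂ) * Complex.I *
        ∏ j ∈ range n, ((1 : ℂ) - (x * Complex.I) ^ 2 / ((j : ℂ) + 1) ^ 2)
      = ((π * x * ∏ j ∈ range n, ((1 : ℝ) + x ^ 2 / ((j : ℝ) + 1) ^ 2) : ℝ) : ℂ) * Complex.I := by
    push_cast
    simp_rw [mul_pow, Complex.I_sq, mul_neg_one, neg_div, sub_neg_eq_add]
    ring
  rw [Function.comp_apply, hterm, Complex.mul_I_im, Complex.ofReal_re]

theorem tendsto_prod_one_add_one_div_sq :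
    Tendsto (fun n : ℕ => ∏ j ∈ range n, ((1 : ℝ) + 1 / ((j : ℝ) + 1) ^ 2))
      atTop (𝓝 (sinh π / π)) := by
  have h := (Real.tendsto_euler_sinh_prod 1).div_const π
  simp only [mul_one, one_pow] at h
  refine h.congr fun n => ?_
  field_simp

theorem add_mul_sub_eq_zero_of_eq_div_mul {φ a b : ℝ} (hφ : 1 + φ ≠ 0)
    (h : a = φ / (1 + φ) * b) : a + φ * (a - b) = 0 := by
  rw [h]
  field_simp
  ring

theorem sq_div_one_add_sq_eq_inv {x : ℝ} (hx : x ≠ 0) :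
    x ^ 2 / (1 + x ^ 2) = (1 + 1 / x ^ 2)⁻¹ := by
  field_simp
  ring

theorem bcch_divergence_condition_needed (h g : ℕ → ℝ)
    (hh1 : h 1 = 1)
    (hrec : ∀ k : ℕ, 1 ≤ k → h (k + 1) = ((k : ℝ) ^ 2 / (1 + (k : ℝ) ^ 2)) * h k)
    (hg : ∀ k : ℕ, g k = h (k + 1) + (k : ℝ) ^ 2 * (h (k + 1) - h k)) :
    (∀ k : ℕ, 1 ≤ k → g k = 0) ∧
    Tendsto h atTop (nhds (Real.pi / Real.sinh Real.pi)) ∧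
    0 < Real.pi / Real.sinh Real.pi := by
  have hsinh : 0 < Real.sinh Real.pi := Real.sinh_pos_iff.mpr Real.pi_pos
  refine ⟨fun k hk => (hg k).trans
    (add_mul_sub_eq_zero_of_eq_div_mul (by positivity) (hrec k hk)), ?_, by positivity⟩
  have hprod (n : ℕ) : ∏ j ∈ range n, ((1 : ℝ) + 1 / ((j : ℝ) + 1) ^ 2)⁻¹ = h (n + 1) :=
    prod_range_induction _ (fun n => h (n + 1)) hh1 n fun k _ => by
      rw [hrec (k + 1) k.succ_pos, mul_comm, Nat.cast_succ,
        sq_div_one_add_sq_eq_inv (Nat.cast_add_one_ne_zero k)]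
  rw [← tendsto_add_atTop_iff_nat 1, ← inv_div]
  simp only [← hprod, prod_inv_distrib]
  exact tendsto_prod_one_add_one_div_sq.inv₀ (by positivity)
end

section
/- Let X be a real Hilbert space and (x_k) a bounded sequence in X such that for any two weak cluster points w₁, w₂ of (x_k), the real sequence (⟨x_k, w₁ − w₂⟩)_k converges. Then (x_k) converges weakly. -/
/-!
Bounded sequences have weak cluster points: the closed span of the sequence is a separable Hilbert
space, where sequential Banach–Alaoglu applies through the Riesz representation, and its weak
limits are weak limits in the whole space because `⟪v, y⟫ = ⟪v, P y⟫` for `v` in the span and `P`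
the orthogonal projection onto it. If `w₁, w₂` are weak cluster points and `⟪x k, w₁ - w₂⟫ → l`,
then along the two subsequences `⟪w₁, w₁ - w₂⟫ = l = ⟪w₂, w₁ - w₂⟫`, so `‖w₁ - w₂‖² = 0`. A bounded
sequence with a single weak cluster point converges weakly to it, since each of its subsequences
has a further subsequence converging weakly, necessarily to that point.
-/

open Filter
open scoped RealInnerProductSpace

/-- `w` is a weak cluster point of the sequence `x`. -/
def IsWeakClusterPoint {X : Type*} [NormedAddCommGroup X] [InnerProductSpace ℝ X]
    (x : ℕ → X) (w : X) : Prop :=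
  ∃ φ : ℕ → ℕ, StrictMono φ ∧
    ∀ y : X, Tendsto (fun k => ⟪x (φ k), y⟫) atTop (nhds ⟪w, y⟫)

open Topology

namespace IsWeakClusterPoint

variable {X : Type*} [NormedAddCommGroup X] [InnerProductSpace ℝ X] {x : ℕ → X} {w : X}

theorem of_comp {ψ : ℕ → ℕ} (hψ : StrictMono ψ) (hw : IsWeakClusterPoint (x ∘ ψ) w) :
    IsWeakClusterPoint x w :=
  let ⟨φ, hφ, hlim⟩ := hw
  ⟨ψ ∘ φ, hψ.comp hφ, hlim⟩

theorem eq_of_tendsto_inner_sub {w' : X} (hw : IsWeakClusterPoint x w)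
    (hw' : IsWeakClusterPoint x w') {l : ℝ}
    (hl : Tendsto (fun k => ⟪x k, w - w'⟫) atTop (𝓝 l)) : w = w' := by
  obtain ⟨φ, hφ, hlim⟩ := hw
  obtain ⟨φ', hφ', hlim'⟩ := hw'
  have hinner : ⟪w, w - w'⟫ = l := tendsto_nhds_unique (hlim _) (hl.comp hφ.tendsto_atTop)
  have hinner' : ⟪w', w - w'⟫ = l := tendsto_nhds_unique (hlim' _) (hl.comp hφ'.tendsto_atTop)
  have hself : ⟪w - w', w - w'⟫ = 0 := by rw [inner_sub_left, hinner, hinner', sub_self]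
  exact sub_eq_zero.mp (inner_self_eq_zero.mp hself)

theorem coe_submodule {K : Submodule ℝ X} [K.HasOrthogonalProjection] {x : ℕ → K} {w : K}
    (hw : IsWeakClusterPoint x w) : IsWeakClusterPoint (fun k => (x k : X)) w := by
  obtain ⟨φ, hφ, hlim⟩ := hw
  refine ⟨φ, hφ, fun y => ?_⟩
  simpa using hlim (K.orthogonalProjectionOnto y)

end IsWeakClusterPoint

section

variable {X : Type*} [NormedAddCommGroup X] [InnerProductSpace ℝ X] [CompleteSpace X]

theorem exists_isWeakClusterPoint_of_separableSpace [TopologicalSpace.SeparableSpace X]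
    {x : ℕ → X} {M : ℝ} (hM : ∀ k, ‖x k‖ ≤ M) : ∃ w, IsWeakClusterPoint x w := by
  let f : ℕ → WeakDual ℝ X := fun k => StrongDual.toWeakDual (InnerProductSpace.toDual ℝ X (x k))
  have hf : ∀ k, f k ∈ WeakDual.toStrongDual ⁻¹' Metric.closedBall 0 M := fun k => by
    simpa [f] using hM k
  obtain ⟨a, -, φ, hφ, hlim⟩ := WeakDual.isSeqCompact_closedBall ℝ X 0 M hf
  refine ⟨(InnerProductSpace.toDual ℝ X).symm (WeakDual.toStrongDual a), φ, hφ, fun y => ?_⟩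
  rw [InnerProductSpace.toDual_symm_apply]
  exact tendsto_iff_forall_eval_tendsto_topDualPairing.mp hlim y

theorem exists_isWeakClusterPoint_of_bounded {x : ℕ → X} {M : ℝ} (hM : ∀ k, ‖x k‖ ≤ M) :
    ∃ w, IsWeakClusterPoint x w := by
  let K := (Submodule.span ℝ (Set.range x)).topologicalClosure
  have hxK : ∀ k, x k ∈ K :=
    fun k => Submodule.le_topologicalClosure _ (Submodule.subset_span ⟨k, rfl⟩)
  have : TopologicalSpace.SeparableSpace K := by
    refine TopologicalSpace.IsSeparable.separableSpace ?_
    rw [Submodule.topologicalClosure_coe]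
    exact (Set.countable_range x).isSeparable.span.closure
  have : CompleteSpace K := (Submodule.isClosed_topologicalClosure _).completeSpace_coe
  obtain ⟨w, hw⟩ := exists_isWeakClusterPoint_of_separableSpace
    (x := fun k => (⟨x k, hxK k⟩ : K)) (M := M) hM
  exact ⟨w, hw.coe_submodule⟩

theorem tendsto_inner_of_forall_isWeakClusterPoint_eq {x : ℕ → X} {M : ℝ}
    (hM : ∀ k, ‖x k‖ ≤ M) {w : X} (hw : ∀ w', IsWeakClusterPoint x w' → w' = w) (y : X) :
    Tendsto (fun k => ⟪x k, y⟫) atTop (𝓝 ⟪w, y⟫) := by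
  refine tendsto_of_subseq_tendsto fun ψ hψ => ?_
  obtain ⟨ψ', -, hψψ'⟩ := strictMono_subseq_of_tendsto_atTop hψ
  obtain ⟨w', φ, hφ, hlim⟩ := exists_isWeakClusterPoint_of_bounded (x := x ∘ ψ ∘ ψ') fun k => hM _
  have : w' = w := hw w' (IsWeakClusterPoint.of_comp hψψ' ⟨φ, hφ, hlim⟩)
  exact ⟨ψ' ∘ φ, this ▸ hlim y⟩

end

theorem bounded_salzo_weakly_convergent
    {X : Type*} [NormedAddCommGroup X] [InnerProductSpace ℝ X] [CompleteSpace X]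
    (x : ℕ → X) (hbd : ∃ M : ℝ, ∀ k, ‖x k‖ ≤ M)
    (hsalzo : ∀ w₁ w₂ : X, IsWeakClusterPoint x w₁ → IsWeakClusterPoint x w₂ →
      ∃ l : ℝ, Tendsto (fun k => ⟪x k, w₁ - w₂⟫) atTop (nhds l)) :
    ∃ s : X, ∀ y : X, Tendsto (fun k => ⟪x k, y⟫) atTop (nhds ⟪s, y⟫) := by
  obtain ⟨M, hM⟩ := hbd
  obtain ⟨s, hs⟩ := exists_isWeakClusterPoint_of_bounded hM
  refine ⟨s, tendsto_inner_of_forall_isWeakClusterPoint_eq hM fun w hw => ?_⟩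
  obtain ⟨l, hl⟩ := hsalzo w s hw hs
  exact hw.eq_of_tendsto_inner_sub hs hl
end

section
/- Let X be a real Hilbert space, f : X → ℝ convex and β-smooth (gradient β-Lipschitz), g : X → (−∞,+∞] convex, lsc, proper, F := f + g, and T := Prox_{g/β} ∘ (Id − (1/β)∇f). Then for all x, y ∈ X, setting y₊ := T y, one has F(x) − F(y₊) ≥ (β/2)‖x − y₊‖² − (β/2)‖x − y‖². -/
/-! The prox step `T y` minimises `g + (β/2)‖· - p‖²` with `p = y - β⁻¹ ∇f(y)`. This objective is
strongly convex, so comparing `T y` with the points of the segment towards `x` gives the three-point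
inequality `g(T y) + (β/2)‖T y - p‖² + (β/2)‖x - T y‖² ≤ g(x) + (β/2)‖x - p‖²`. After the squares are
expanded around `y`, adding the descent lemma
`f(T y) ≤ f(y) + ⟪∇f(y), T y - y⟫ + (β/2)‖T y - y‖²` and the gradient inequality
`f(y) + ⟪∇f(y), x - y⟫ ≤ f(x)` of the convex function `f` gives the claim. -/

open Set Filter Topology
open scoped RealInnerProductSpace NNReal

section

variable {X : Type*} [NormedAddCommGroup X] [InnerProductSpace ℝ X]

theorem norm_smul_add_smul_sub_sq {a b : ℝ} (hab : a + b = 1) (x y p : X) :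
    ‖a • x + b • y - p‖ ^ 2 = a * ‖x - p‖ ^ 2 + b * ‖y - p‖ ^ 2 - a * b * ‖x - y‖ ^ 2 := by
  obtain rfl : b = 1 - a := by linarith
  have hsplit : a • x + (1 - a) • y - p = a • (x - p) + (1 - a) • (y - p) := by module
  have hdiff : x - y = (x - p) - (y - p) := by abel
  rw [hsplit, hdiff, norm_add_sq_real, norm_sub_sq_real (x - p) (y - p), norm_smul, norm_smul,
    real_inner_smul_left, real_inner_smul_right, Real.norm_eq_abs, Real.norm_eq_abs,
    mul_pow, mul_pow, sq_abs, sq_abs]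
  ring

theorem mul_norm_sub_sub_smul_sq {β : ℝ} (hβ : β ≠ 0) (u y w : X) :
    β / 2 * ‖u - (y - β⁻¹ • w)‖ ^ 2
      = β / 2 * ‖u - y‖ ^ 2 + ⟪w, u - y⟫ + ‖w‖ ^ 2 / (2 * β) := by
  rw [show u - (y - β⁻¹ • w) = (u - y) + β⁻¹ • w by abel, norm_add_sq_real, norm_smul,
    real_inner_smul_right, real_inner_comm, Real.norm_eq_abs, mul_pow, sq_abs]
  field_simp

theorem exists_coe_eq_le_of_convex_combination {φ : X → EReal}
    (hconv : ∀ x y : X, ∀ a b : ℝ, 0 ≤ a → 0 ≤ b → a + b = 1 →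
      φ (a • x + b • y) ≤ (a : EReal) * φ x + (b : EReal) * φ y)
    (hbot : ∀ x, φ x ≠ ⊥) {x y : X} {r s : ℝ} (hx : φ x = r) (hy : φ y = s)
    {a b : ℝ} (ha : 0 ≤ a) (hb : 0 ≤ b) (hab : a + b = 1) :
    ∃ q : ℝ, φ (a • x + b • y) = q ∧ q ≤ a * r + b * s := by
  have h := hconv x y a b ha hb hab
  rw [hx, hy, ← EReal.coe_mul, ← EReal.coe_mul, ← EReal.coe_add] at h
  have hq := EReal.coe_toReal (ne_top_of_le_ne_top (EReal.coe_ne_top _) h) (hbot _)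
  exact ⟨_, hq.symm, by rwa [← hq, EReal.coe_le_coe_iff] at h⟩

theorem exists_coe_eq_add_norm_sub_sq_le {φ : X → EReal}
    (hconv : ∀ x y : X, ∀ a b : ℝ, 0 ≤ a → 0 ≤ b → a + b = 1 →
      φ (a • x + b • y) ≤ (a : EReal) * φ x + (b : EReal) * φ y)
    (hbot : ∀ x, φ x ≠ ⊥) (κ : ℝ) {p z : X}
    (hmin : ∀ u, φ z + ((κ * ‖z - p‖ ^ 2 : ℝ) : EReal) ≤ φ u + ((κ * ‖u - p‖ ^ 2 : ℝ) : EReal))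
    {x : X} {a : ℝ} (hx : φ x = a) :
    ∃ b : ℝ, φ z = b ∧ b + κ * ‖z - p‖ ^ 2 + κ * ‖x - z‖ ^ 2 ≤ a + κ * ‖x - p‖ ^ 2 := by
  have hz_ne_top : φ z ≠ ⊤ := by
    intro hz
    have h := hmin x
    rw [hz, EReal.top_add_coe, hx, ← EReal.coe_add, top_le_iff] at h
    exact EReal.coe_ne_top _ h
  obtain ⟨b, hb⟩ : ∃ b : ℝ, φ z = b := ⟨_, (EReal.coe_toReal hz_ne_top (hbot z)).symm⟩
  refine ⟨b, hb, ?_⟩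
  have hseg : ∀ t ∈ Ioo (0 : ℝ) 1,
      b + κ * ‖z - p‖ ^ 2 + (1 - t) * (κ * ‖x - z‖ ^ 2) ≤ a + κ * ‖x - p‖ ^ 2 := by
    rintro t ⟨ht₀, ht₁⟩
    have hsum : (1 - t) + t = 1 := by ring
    obtain ⟨q, hq, hqle⟩ :=
      exists_coe_eq_le_of_convex_combination hconv hbot hb hx (by linarith) ht₀.le hsum
    have h := hmin ((1 - t) • z + t • x)
    rw [hb, hq, ← EReal.coe_add, ← EReal.coe_add, EReal.coe_le_coe_iff,
      norm_smul_add_smul_sub_sq hsum, norm_sub_rev z x] at h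
    refine le_of_mul_le_mul_left ?_ ht₀
    linarith
  have hlim : Tendsto (fun t : ℝ => b + κ * ‖z - p‖ ^ 2 + (1 - t) * (κ * ‖x - z‖ ^ 2))
      (𝓝[>] 0) (𝓝 (b + κ * ‖z - p‖ ^ 2 + κ * ‖x - z‖ ^ 2)) := by
    have hcont : Continuous (fun t : ℝ => b + κ * ‖z - p‖ ^ 2 + (1 - t) * (κ * ‖x - z‖ ^ 2)) := by
      fun_prop
    simpa using hcont.continuousWithinAt.tendsto (x := 0) (s := Ioi 0)
  refine le_of_tendsto hlim ?_
  filter_upwards [Ioo_mem_nhdsGT zero_lt_one] with t ht using hseg t ht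

variable [CompleteSpace X]

open AffineMap

theorem HasGradientAt.hasDerivAt_comp_lineMap {f : X → ℝ} {f' a b : X} {t : ℝ}
    (hf : HasGradientAt f f' (lineMap a b t)) :
    HasDerivAt (f ∘ lineMap a b) ⟪f', b - a⟫ t := by
  have h := hf.hasFDerivAt.comp_hasDerivAt t hasDerivAt_lineMap
  simpa only [InnerProductSpace.toDual_apply_apply] using h

theorem ConvexOn.add_inner_le_of_hasGradientAt {s : Set X} {f : X → ℝ} (hf : ConvexOn ℝ s f)
    {a b f' : X} (ha : a ∈ s) (hb : b ∈ s) (hf' : HasGradientAt f f' a) :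
    f a + ⟪f', b - a⟫ ≤ f b := by
  have hslope := (hf.comp_affineMap (lineMap a b)).le_slope_of_hasDerivAt
    (by simpa using ha) (by simpa using hb) zero_lt_one
    (HasGradientAt.hasDerivAt_comp_lineMap (by simpa using hf'))
  simp only [slope, Function.comp_apply, lineMap_apply_zero, lineMap_apply_one, sub_zero, inv_one,
    vsub_eq_sub, smul_eq_mul, one_mul] at hslope
  linarith

theorem LipschitzWith.le_add_inner_add_sq_of_hasGradientAt {f : X → ℝ} {f' : X → X} {K : ℝ≥0}
    (hlip : LipschitzWith K f') (hf : ∀ x, HasGradientAt f (f' x) x) (a b : X) :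
    f b ≤ f a + ⟪f' a, b - a⟫ + K / 2 * ‖b - a‖ ^ 2 := by
  set ψ : ℝ → ℝ := fun t => f (lineMap a b t) - t * ⟪f' a, b - a⟫ - K / 2 * t ^ 2 * ‖b - a‖ ^ 2
  have hψ : ∀ t, HasDerivAt ψ (⟪f' (lineMap a b t) - f' a, b - a⟫ - K * t * ‖b - a‖ ^ 2) t := by
    intro t
    have h := (((hf (lineMap a b t)).hasDerivAt_comp_lineMap).sub
      ((hasDerivAt_id t).mul_const ⟪f' a, b - a⟫)).sub
      (((hasDerivAt_pow 2 t).const_mul ((K : ℝ) / 2)).mul_const (‖b - a‖ ^ 2))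
    refine h.congr_deriv ?_
    simp only [inner_sub_left, Nat.add_one_sub_one, pow_one, Nat.cast_ofNat]
    ring
  have hψ'_nonpos : ∀ t, 0 ≤ t → ⟪f' (lineMap a b t) - f' a, b - a⟫ - K * t * ‖b - a‖ ^ 2 ≤ 0 := by
    intro t ht
    have hdist : ‖f' (lineMap a b t) - f' a‖ ≤ K * (t * ‖b - a‖) := by
      rw [← dist_eq_norm]
      calc _ ≤ K * dist (lineMap a b t) a := hlip.dist_le_mul _ _
        _ = K * (t * ‖b - a‖) := by
          rw [dist_lineMap_left, Real.norm_of_nonneg ht, dist_comm, dist_eq_norm]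
    calc ⟪f' (lineMap a b t) - f' a, b - a⟫ - K * t * ‖b - a‖ ^ 2
        ≤ ‖f' (lineMap a b t) - f' a‖ * ‖b - a‖ - K * t * ‖b - a‖ ^ 2 := by
          gcongr; exact real_inner_le_norm _ _
      _ ≤ K * (t * ‖b - a‖) * ‖b - a‖ - K * t * ‖b - a‖ ^ 2 := by gcongr
      _ = 0 := by ring
  have hanti : AntitoneOn ψ (Icc 0 1) :=
    antitoneOn_of_hasDerivWithinAt_nonpos (convex_Icc 0 1)
      (fun t _ => (hψ t).continuousAt.continuousWithinAt) (fun t _ => (hψ t).hasDerivWithinAt)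
      (fun t ht => hψ'_nonpos t (interior_subset ht).1)
  have h := hanti (left_mem_Icc.2 zero_le_one) (right_mem_Icc.2 zero_le_one) zero_le_one
  simp only [ψ, lineMap_apply_zero, lineMap_apply_one, zero_mul, one_mul, one_pow, mul_one,
    sub_zero, ne_eq, OfNat.ofNat_ne_zero, not_false_eq_true, zero_pow, mul_zero] at h
  linarith

end

theorem prox_gradient_sufficient_decrease_general
    {X : Type*} [NormedAddCommGroup X] [InnerProductSpace ℝ X] [CompleteSpace X]
    (β : ℝ) (hβ : 0 < β)
    (f : X → ℝ) (hf : ConvexOn ℝ Set.univ f)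
    (f' : X → X) (hf' : ∀ x, HasGradientAt f (f' x) x)
    (hlip : LipschitzWith (Real.toNNReal β) f')
    (g : X → EReal)
    (hgconv : ∀ x y : X, ∀ a b : ℝ, 0 ≤ a → 0 ≤ b → a + b = 1 →
      g (a • x + b • y) ≤ (a : EReal) * g x + (b : EReal) * g y)
    (hg_ne_bot : ∀ x, g x ≠ ⊥)
    (T : X → X)
    (hT : ∀ y u : X,
      g (T y) + (((β / 2) * ‖T y - (y - β⁻¹ • f' y)‖ ^ 2 : ℝ) : EReal)
        ≤ g u + (((β / 2) * ‖u - (y - β⁻¹ • f' y)‖ ^ 2 : ℝ) : EReal))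
    (F : X → EReal) (hF : ∀ x, F x = (f x : EReal) + g x) :
    ∀ x y : X,
      F (T y) + (((β / 2) * ‖x - T y‖ ^ 2 - (β / 2) * ‖x - y‖ ^ 2 : ℝ) : EReal)
        ≤ F x := by
  intro x y
  by_cases hx_top : g x = ⊤
  · simp [hF, hx_top]
  obtain ⟨a, hx⟩ : ∃ a : ℝ, g x = a := ⟨_, (EReal.coe_toReal hx_top (hg_ne_bot x)).symm⟩
  obtain ⟨b, hb, hprox⟩ :=
    exists_coe_eq_add_norm_sub_sq_le hgconv hg_ne_bot (β / 2) (hT y) hx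
  have hdescent := hlip.le_add_inner_add_sq_of_hasGradientAt hf' y (T y)
  have hgradient := hf.add_inner_le_of_hasGradientAt (mem_univ y) (mem_univ x) (hf' y)
  rw [Real.coe_toNNReal _ hβ.le] at hdescent
  rw [mul_norm_sub_sub_smul_sq hβ.ne', mul_norm_sub_sub_smul_sq hβ.ne'] at hprox
  rw [hF, hF, hx, hb]
  norm_cast
  linarith

theorem prox_gradient_sufficient_decrease
    {X : Type*} [NormedAddCommGroup X] [InnerProductSpace ℝ X] [CompleteSpace X]
    (β : ℝ) (hβ : 0 < β)
    (f : X → ℝ) (hf : ConvexOn ℝ Set.univ f)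
    (f' : X → X) (hf' : ∀ x, HasGradientAt f (f' x) x)
    (hlip : LipschitzWith (Real.toNNReal β) f')
    (g : X → EReal)
    (hgconv : ∀ x y : X, ∀ a b : ℝ, 0 ≤ a → 0 ≤ b → a + b = 1 →
      g (a • x + b • y) ≤ (a : EReal) * g x + (b : EReal) * g y)
    (hglsc : LowerSemicontinuous g)
    (hg_ne_bot : ∀ x, g x ≠ ⊥) (hg_proper : ∃ x, g x ≠ ⊤)
    (T : X → X)
    (hT : ∀ y u : X,
      g (T y) + (((β / 2) * ‖T y - (y - β⁻¹ • f' y)‖ ^ 2 : ℝ) : EReal)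
        ≤ g u + (((β / 2) * ‖u - (y - β⁻¹ • f' y)‖ ^ 2 : ℝ) : EReal))
    (F : X → EReal) (hF : ∀ x, F x = (f x : EReal) + g x) :
    ∀ x y : X,
      F (T y) + (((β / 2) * ‖x - T y‖ ^ 2 - (β / 2) * ‖x - y‖ ^ 2 : ℝ) : EReal)
        ≤ F x :=
  prox_gradient_sufficient_decrease_general β hβ f hf f' hf' hlip g hgconv hg_ne_bot T hT F hF
end
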